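/- Let X̄ be the space of ρ-paths from a basepoint in a length space X with the metric d(c₁,c₂)=L(c₁)+L(c₂)−2L(c₁∧c₂). Then X̄ is a geodesic metric space: any two points c₁,c₂ ∈ X̄ are joined by a geodesic obtained by first truncating c₁ down to the common initial segment c₁∧c₂ and then extending along c₂. -/

import Mathlib

open Set

/-- An arclength-parameterized weakly normal rectifiable path (ρ-path) in a metric
space `X`.  The path is defined on `[0, len]`, extended constantly outside. -/
structure RPath (X : Type*) [MetricSpace X] where
  /-- the length of the path -/
  len : ℝ
  len_nonneg : 0 ≤ len
  toFun : ℝ → X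
  contOn : ContinuousOn toFun (Icc 0 len)
  /-- arclength parameterization: the length of the restriction to `[s,t]` is `t - s`. -/
  arclength : ∀ s t : ℝ, 0 ≤ s → s ≤ t → t ≤ len →
    eVariationOn toFun (Icc s t) = ENNReal.ofReal (t - s)
  clamp_left : ∀ t : ℝ, t ≤ 0 → toFun t = toFun 0
  clamp_right : ∀ t : ℝ, len ≤ t → toFun t = toFun len
  /-- weak normality: no nontrivial subsegment `[u,v]` with equal endpoints is
  null-homotopic in its own image rel endpoints. -/
  weaklyNormal : ¬ ∃ u v : ℝ, 0 ≤ u ∧ u < v ∧ v ≤ len ∧ toFun u = toFun v ∧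
    ∃ H : ℝ × ℝ → X, ContinuousOn H (Icc u v ×ˢ Icc 0 1) ∧
      (∀ t ∈ Icc u v, H (t, 0) = toFun t) ∧
      (∀ t ∈ Icc u v, H (t, 1) = toFun u) ∧
      (∀ s ∈ Icc (0:ℝ) 1, H (u, s) = toFun u ∧ H (v, s) = toFun v) ∧
      (∀ p ∈ Icc u v ×ˢ Icc (0:ℝ) 1, H p ∈ toFun '' Icc u v)

namespace RPath

variable {X : Type*} [MetricSpace X]

/-- `c` starts at the point `p`. -/
def StartsAt (c : RPath X) (p : X) : Prop := c.toFun 0 = p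

/-- `c` ends at the point `p`. -/
def EndsAt (c : RPath X) (p : X) : Prop := c.toFun c.len = p

/-- The length `L(c₁ ∧ c₂)` of the longest common initial segment of two paths. -/
noncomputable def wedgeLen (c₁ c₂ : RPath X) : ℝ :=
  sSup {b : ℝ | 0 ≤ b ∧ b ≤ c₁.len ∧ b ≤ c₂.len ∧ ∀ t ∈ Icc 0 b, c₁.toFun t = c₂.toFun t}

/-- The distance `d(c₁,c₂) = L(c₁) + L(c₂) - 2 L(c₁ ∧ c₂)`. -/
noncomputable def rhoDist (c₁ c₂ : RPath X) : ℝ :=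
  c₁.len + c₂.len - 2 * wedgeLen c₁ c₂

end RPath

/-- A length space: a metric space with at least two points in which any two points
are joined by paths of length arbitrarily close to the distance between them. -/
def IsLengthSpace (X : Type*) [MetricSpace X] : Prop :=
  (∃ x y : X, x ≠ y) ∧
  ∀ x y : X, ∀ ε : ℝ, 0 < ε → ∃ (c : ℝ → X) (b : ℝ), 0 ≤ b ∧
    ContinuousOn c (Icc 0 b) ∧ c 0 = x ∧ c b = y ∧
    eVariationOn c (Icc 0 b) < ENNReal.ofReal (dist x y + ε)


/-!
Write `w = L(c₁ ∧ c₂)`. Two initial segments of ρ-paths `c₁`, `c₂` share the initial segment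
`c₁ ∧ c₂` cut down to the shorter of the two, because the set of lengths on which `c₁` and `c₂`
agree is the closed interval `[0, w]` (closed by continuity). Hence two truncations of one path
are at distance `|a - b|`, and a truncation of `c₁` and one of `c₂`, both of length at least `w`,
are at distance `a + b - 2w`. Running `c₁` back to length `w` and then forward along `c₂` is
therefore parametrized by arclength in the metric `d`.
-/

namespace RPath

variable {X : Type*} [MetricSpace X]

lemma ext_of_eqOn {c d : RPath X} (hl : c.len = d.len) (hf : EqOn c.toFun d.toFun (Icc 0 c.len)) :
    c = d := by
  suffices c.toFun = d.toFun by cases c; cases d; simp_all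
  funext t
  have hclamp : ∀ e : RPath X, e.toFun (max 0 (min t e.len)) = e.toFun t := by
    intro e
    rcases le_total t 0 with ht | ht
    · rw [min_eq_left (ht.trans e.len_nonneg), max_eq_left ht, e.clamp_left t ht]
    rcases le_total t e.len with ht' | ht'
    · rw [min_eq_left ht', max_eq_right ht]
    · rw [min_eq_right ht', max_eq_right e.len_nonneg, e.clamp_right t ht']
  rw [← hclamp c, ← hclamp d, ← hl]
  exact hf ⟨le_max_left _ _, max_le c.len_nonneg (min_le_right _ _)⟩

noncomputable def restrict (c : RPath X) (A : ℝ) (hA0 : 0 ≤ A) (hA : A ≤ c.len) : RPath X where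
  len := A
  len_nonneg := hA0
  toFun t := c.toFun (min t A)
  contOn := (c.contOn.mono (Icc_subset_Icc le_rfl hA)).congr fun _ ht =>
    congrArg c.toFun (min_eq_left ht.2)
  arclength s t hs hst ht := by
    rw [eVariationOn.eq_of_eqOn (f' := c.toFun) fun u hu =>
      congrArg c.toFun (min_eq_left (hu.2.trans ht))]
    exact c.arclength s t hs hst (ht.trans hA)
  clamp_left t ht := by
    simp only [min_eq_left (ht.trans hA0), min_eq_left hA0, c.clamp_left t ht]
  clamp_right t ht := by simp only [min_eq_right ht, min_self]
  weaklyNormal := by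
    rintro ⟨u, v, hu, huv, hv, heq, H, Hcont, H0, H1, Hends, Himg⟩
    have hc : ∀ t ∈ Icc u v, c.toFun (min t A) = c.toFun t := fun t ht => by
      rw [min_eq_left (ht.2.trans hv)]
    have hcu := hc u ⟨le_rfl, huv.le⟩
    have hcv := hc v ⟨huv.le, le_rfl⟩
    refine c.weaklyNormal ⟨u, v, hu, huv, hv.trans hA, hcu ▸ hcv ▸ heq, H, Hcont,
      fun t ht => (H0 t ht).trans (hc t ht), fun t ht => (H1 t ht).trans hcu,
      fun s hs => ?_, fun p hp => image_congr hc ▸ Himg p hp⟩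
    rw [(Hends s hs).1, (Hends s hs).2, hcu, hcv]
    exact ⟨rfl, rfl⟩

/-- The length `a` is clamped to `[0, c.len]`, so that `trunc` is defined for every real `a`. -/
noncomputable def trunc (c : RPath X) (a : ℝ) : RPath X :=
  c.restrict (max 0 (min a c.len)) (le_max_left _ _) (max_le c.len_nonneg (min_le_right _ _))

def IsPrefix (d c : RPath X) : Prop :=
  d.len ≤ c.len ∧ EqOn d.toFun c.toFun (Icc 0 d.len)

lemma IsPrefix.refl (c : RPath X) : c.IsPrefix c := ⟨le_rfl, fun _ _ => rfl⟩

lemma IsPrefix.toFun_zero {d c : RPath X} (h : d.IsPrefix c) : d.toFun 0 = c.toFun 0 :=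
  h.2 ⟨le_rfl, d.len_nonneg⟩

lemma trunc_len {c : RPath X} {a : ℝ} (ha : a ∈ Icc 0 c.len) : (c.trunc a).len = a := by
  simp [trunc, restrict, min_eq_left ha.2, max_eq_right ha.1]

lemma isPrefix_trunc (c : RPath X) (a : ℝ) : (c.trunc a).IsPrefix c :=
  ⟨max_le c.len_nonneg (min_le_right _ _), fun _ ht => congrArg c.toFun (min_eq_left ht.2)⟩

lemma trunc_eq_of_isPrefix {d c : RPath X} (h : d.IsPrefix c) : c.trunc d.len = d := by
  have hlen : (c.trunc d.len).len = d.len := trunc_len ⟨d.len_nonneg, h.1⟩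
  exact ext_of_eqOn hlen fun t ht => ((isPrefix_trunc c d.len).2 ht).trans (h.2 (hlen ▸ ht)).symm

lemma trunc_self (c : RPath X) : c.trunc c.len = c :=
  trunc_eq_of_isPrefix (IsPrefix.refl c)

def wedgeSet (c₁ c₂ : RPath X) : Set ℝ :=
  {b : ℝ | 0 ≤ b ∧ b ≤ c₁.len ∧ b ≤ c₂.len ∧ ∀ t ∈ Icc 0 b, c₁.toFun t = c₂.toFun t}

lemma wedgeLen_eq_sSup (c₁ c₂ : RPath X) : wedgeLen c₁ c₂ = sSup (wedgeSet c₁ c₂) := rfl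

variable {c c₁ c₂ : RPath X}

lemma wedgeLen_nonneg : 0 ≤ wedgeLen c₁ c₂ :=
  Real.sSup_nonneg fun _ hx => hx.1

lemma wedgeLen_le_left : wedgeLen c₁ c₂ ≤ c₁.len :=
  Real.sSup_le (fun _ hx => hx.2.1) c₁.len_nonneg

lemma wedgeLen_le_right : wedgeLen c₁ c₂ ≤ c₂.len :=
  Real.sSup_le (fun _ hx => hx.2.2.1) c₂.len_nonneg

lemma zero_mem_wedgeSet (h0 : c₁.toFun 0 = c₂.toFun 0) : (0 : ℝ) ∈ wedgeSet c₁ c₂ :=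
  ⟨le_rfl, c₁.len_nonneg, c₂.len_nonneg, fun _ ht => le_antisymm ht.2 ht.1 ▸ h0⟩

lemma le_wedgeLen {x : ℝ} (hx : x ∈ wedgeSet c₁ c₂) : x ≤ wedgeLen c₁ c₂ :=
  le_csSup ⟨c₁.len, fun _ hy => hy.2.1⟩ hx

lemma wedgeLen_comm (c₁ c₂ : RPath X) : wedgeLen c₁ c₂ = wedgeLen c₂ c₁ := by
  rw [wedgeLen_eq_sSup, wedgeLen_eq_sSup]
  congr 1
  ext x
  constructor <;> rintro ⟨h0, h1, h2, h⟩ <;> exact ⟨h0, h2, h1, fun t ht => (h t ht).symm⟩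

lemma rhoDist_comm (c₁ c₂ : RPath X) : rhoDist c₁ c₂ = rhoDist c₂ c₁ := by
  rw [rhoDist, rhoDist, wedgeLen_comm]
  ring

lemma eqOn_wedgeLen (h0 : c₁.toFun 0 = c₂.toFun 0) :
    EqOn c₁.toFun c₂.toFun (Icc 0 (wedgeLen c₁ c₂)) := by
  set w := wedgeLen c₁ c₂
  have hIco : EqOn c₁.toFun c₂.toFun (Ico 0 w) := fun t ht => by
    obtain ⟨b, hb, htb⟩ := exists_lt_of_lt_csSup ⟨0, zero_mem_wedgeSet h0⟩ ht.2
    exact hb.2.2.2 t ⟨ht.1, htb.le⟩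
  rcases (wedgeLen_nonneg : 0 ≤ w).eq_or_lt with hw | hw
  · intro t ht
    obtain rfl : t = 0 := le_antisymm (hw ▸ ht.2) ht.1
    exact h0
  exact hIco.of_subset_closure (c₁.contOn.mono (Icc_subset_Icc le_rfl wedgeLen_le_left))
    (c₂.contOn.mono (Icc_subset_Icc le_rfl wedgeLen_le_right)) Ico_subset_Icc_self
    (closure_Ico hw.ne).superset

lemma wedgeSet_eq_Icc (h0 : c₁.toFun 0 = c₂.toFun 0) :
    wedgeSet c₁ c₂ = Icc 0 (wedgeLen c₁ c₂) := by
  refine Subset.antisymm (fun x hx => ⟨hx.1, le_wedgeLen hx⟩) fun x hx => ?_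
  exact ⟨hx.1, hx.2.trans wedgeLen_le_left, hx.2.trans wedgeLen_le_right,
    fun t ht => eqOn_wedgeLen h0 ⟨ht.1, ht.2.trans hx.2⟩⟩

lemma wedgeLen_of_isPrefix {d₁ d₂ : RPath X} (h0 : c₁.toFun 0 = c₂.toFun 0)
    (hd₁ : d₁.IsPrefix c₁) (hd₂ : d₂.IsPrefix c₂) :
    wedgeLen d₁ d₂ = min (wedgeLen c₁ c₂) (min d₁.len d₂.len) := by
  suffices wedgeSet d₁ d₂ = wedgeSet c₁ c₂ ∩ Icc 0 (min d₁.len d₂.len) by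
    rw [wedgeLen_eq_sSup, this, wedgeSet_eq_Icc h0, Icc_inter_Icc, sup_idem,
      csSup_Icc (le_min wedgeLen_nonneg (le_min d₁.len_nonneg d₂.len_nonneg))]
  ext x
  simp only [wedgeSet, mem_inter_iff, mem_ofPred_eq, mem_Icc, le_min_iff]
  constructor
  · rintro ⟨hx0, hx₁, hx₂, h⟩
    refine ⟨⟨hx0, hx₁.trans hd₁.1, hx₂.trans hd₂.1, fun t ht => ?_⟩, hx0, hx₁, hx₂⟩
    rw [← hd₁.2 ⟨ht.1, ht.2.trans hx₁⟩, ← hd₂.2 ⟨ht.1, ht.2.trans hx₂⟩]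
    exact h t ht
  · rintro ⟨⟨hx0, -, -, h⟩, -, hx₁, hx₂⟩
    refine ⟨hx0, hx₁, hx₂, fun t ht => ?_⟩
    rw [hd₁.2 ⟨ht.1, ht.2.trans hx₁⟩, hd₂.2 ⟨ht.1, ht.2.trans hx₂⟩]
    exact h t ht

lemma wedgeLen_self (c : RPath X) : wedgeLen c c = c.len :=
  wedgeLen_le_left.antisymm (le_wedgeLen ⟨c.len_nonneg, le_rfl, le_rfl, fun _ _ => rfl⟩)

lemma rhoDist_trunc_trunc {a b : ℝ} (ha : a ∈ Icc 0 c.len) (hb : b ∈ Icc 0 c.len) :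
    rhoDist (c.trunc a) (c.trunc b) = |a - b| := by
  rw [rhoDist, wedgeLen_of_isPrefix rfl (isPrefix_trunc c a) (isPrefix_trunc c b), wedgeLen_self,
    trunc_len ha, trunc_len hb, min_eq_right (min_le_of_left_le ha.2), abs_sub_comm,
    ← max_sub_min_eq_abs, ← min_add_max a b]
  ring

lemma rhoDist_trunc_trunc_of_wedgeLen_le (h0 : c₁.toFun 0 = c₂.toFun 0) {a b : ℝ}
    (ha : a ∈ Icc (wedgeLen c₁ c₂) c₁.len) (hb : b ∈ Icc (wedgeLen c₁ c₂) c₂.len) :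
    rhoDist (c₁.trunc a) (c₂.trunc b) = a + b - 2 * wedgeLen c₁ c₂ := by
  have ha' : a ∈ Icc 0 c₁.len := ⟨wedgeLen_nonneg.trans ha.1, ha.2⟩
  have hb' : b ∈ Icc 0 c₂.len := ⟨wedgeLen_nonneg.trans hb.1, hb.2⟩
  rw [rhoDist, wedgeLen_of_isPrefix h0 (isPrefix_trunc c₁ a) (isPrefix_trunc c₂ b),
    trunc_len ha', trunc_len hb', min_eq_left (le_min ha.1 hb.1)]

lemma trunc_wedgeLen (h0 : c₁.toFun 0 = c₂.toFun 0) :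
    c₁.trunc (wedgeLen c₁ c₂) = c₂.trunc (wedgeLen c₁ c₂) := by
  have hw : wedgeLen c₁ c₂ ∈ Icc 0 c₂.len := ⟨wedgeLen_nonneg, wedgeLen_le_right⟩
  have hprefix : (c₂.trunc (wedgeLen c₁ c₂)).IsPrefix c₁ := by
    refine ⟨(trunc_len hw).trans_le wedgeLen_le_left, fun t ht => ?_⟩
    exact ((isPrefix_trunc c₂ _).2 ht).trans (eqOn_wedgeLen h0 (trunc_len hw ▸ ht)).symm
  simpa only [trunc_len hw] using trunc_eq_of_isPrefix hprefix

noncomputable def geodesic (c₁ c₂ : RPath X) (s : ℝ) : RPath X :=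
  if s ≤ c₁.len - wedgeLen c₁ c₂ then c₁.trunc (c₁.len - s)
  else c₂.trunc (s - c₁.len + 2 * wedgeLen c₁ c₂)

lemma geodesic_of_le {s : ℝ} (hs : s ≤ c₁.len - wedgeLen c₁ c₂) :
    geodesic c₁ c₂ s = c₁.trunc (c₁.len - s) :=
  if_pos hs

/-- At `s = c₁.len - wedgeLen c₁ c₂` both branches of `geodesic` give `c₁ ∧ c₂`. -/
lemma geodesic_of_ge (h0 : c₁.toFun 0 = c₂.toFun 0) {s : ℝ} (hs : c₁.len - wedgeLen c₁ c₂ ≤ s) :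
    geodesic c₁ c₂ s = c₂.trunc (s - c₁.len + 2 * wedgeLen c₁ c₂) := by
  unfold geodesic
  split_ifs with h
  · obtain rfl : s = c₁.len - wedgeLen c₁ c₂ := le_antisymm h hs
    rw [sub_sub_cancel, show c₁.len - wedgeLen c₁ c₂ - c₁.len + 2 * wedgeLen c₁ c₂ =
      wedgeLen c₁ c₂ by ring]
    exact trunc_wedgeLen h0
  · rfl

lemma geodesic_toFun_zero (h0 : c₁.toFun 0 = c₂.toFun 0) (s : ℝ) :
    (geodesic c₁ c₂ s).toFun 0 = c₁.toFun 0 := by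
  unfold geodesic
  split_ifs
  · exact (isPrefix_trunc _ _).toFun_zero
  · exact (isPrefix_trunc _ _).toFun_zero.trans h0.symm

lemma geodesic_zero : geodesic c₁ c₂ 0 = c₁ := by
  rw [geodesic_of_le (sub_nonneg.2 wedgeLen_le_left), sub_zero, trunc_self]

lemma geodesic_rhoDist (h0 : c₁.toFun 0 = c₂.toFun 0) : geodesic c₁ c₂ (rhoDist c₁ c₂) = c₂ := by
  rw [geodesic_of_ge h0 (by rw [rhoDist]; linarith [wedgeLen_le_right (c₁ := c₁) (c₂ := c₂)]),
    rhoDist, show c₁.len + c₂.len - 2 * wedgeLen c₁ c₂ - c₁.len + 2 * wedgeLen c₁ c₂ = c₂.len by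
      ring, trunc_self]

lemma rhoDist_geodesic_of_le (h0 : c₁.toFun 0 = c₂.toFun 0) {s t : ℝ} (hs : 0 ≤ s)
    (ht : t ≤ rhoDist c₁ c₂) (hst : s ≤ t) :
    rhoDist (geodesic c₁ c₂ s) (geodesic c₁ c₂ t) = t - s := by
  have hw0 : 0 ≤ wedgeLen c₁ c₂ := wedgeLen_nonneg
  have hw₁ : wedgeLen c₁ c₂ ≤ c₁.len := wedgeLen_le_left
  rw [rhoDist] at ht
  rcases le_total t (c₁.len - wedgeLen c₁ c₂) with htB | htB
  · rw [geodesic_of_le (hst.trans htB), geodesic_of_le htB,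
      rhoDist_trunc_trunc ⟨by linarith, by linarith⟩ ⟨by linarith, by linarith⟩,
      abs_of_nonneg (by linarith)]
    ring
  rcases le_total s (c₁.len - wedgeLen c₁ c₂) with hsB | hsB
  · rw [geodesic_of_le hsB, geodesic_of_ge h0 htB,
      rhoDist_trunc_trunc_of_wedgeLen_le h0 ⟨by linarith, by linarith⟩ ⟨by linarith, by linarith⟩]
    ring
  · rw [geodesic_of_ge h0 hsB, geodesic_of_ge h0 htB,
      rhoDist_trunc_trunc ⟨by linarith, by linarith⟩ ⟨by linarith, by linarith⟩,
      abs_of_nonpos (by linarith)]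
    ring

lemma rhoDist_geodesic (h0 : c₁.toFun 0 = c₂.toFun 0) {s t : ℝ} (hs : s ∈ Icc 0 (rhoDist c₁ c₂))
    (ht : t ∈ Icc 0 (rhoDist c₁ c₂)) :
    rhoDist (geodesic c₁ c₂ s) (geodesic c₁ c₂ t) = |s - t| := by
  rcases le_total s t with hst | hts
  · rw [rhoDist_geodesic_of_le h0 hs.1 ht.2 hst, abs_of_nonpos (sub_nonpos.2 hst), neg_sub]
  · rw [rhoDist_comm, rhoDist_geodesic_of_le h0 ht.1 hs.2 hts, abs_of_nonneg (sub_nonneg.2 hts)]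

end RPath

theorem rhoPathSpace_geodesic_general {X : Type*} [MetricSpace X]
    (base : X) (c₁ c₂ : RPath X) (h₁ : c₁.StartsAt base) (h₂ : c₂.StartsAt base) :
    ∃ γ : ℝ → RPath X,
      (∀ s ∈ Icc 0 (RPath.rhoDist c₁ c₂), (γ s).StartsAt base) ∧
      γ 0 = c₁ ∧ γ (RPath.rhoDist c₁ c₂) = c₂ ∧
      -- `γ` is a geodesic
      (∀ s ∈ Icc 0 (RPath.rhoDist c₁ c₂), ∀ t ∈ Icc 0 (RPath.rhoDist c₁ c₂),
        RPath.rhoDist (γ s) (γ t) = |s - t|) ∧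
      -- first `γ` truncates `c₁` down to `c₁ ∧ c₂` ...
      (∀ s ∈ Icc 0 (c₁.len - RPath.wedgeLen c₁ c₂),
        (γ s).len = c₁.len - s ∧ ∀ t ∈ Icc 0 (γ s).len, (γ s).toFun t = c₁.toFun t) ∧
      -- ... and then extends along `c₂`
      (∀ s ∈ Icc (c₁.len - RPath.wedgeLen c₁ c₂) (RPath.rhoDist c₁ c₂),
        (γ s).len = s - c₁.len + 2 * RPath.wedgeLen c₁ c₂ ∧
        ∀ t ∈ Icc 0 (γ s).len, (γ s).toFun t = c₂.toFun t) := by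
  have h0 : c₁.toFun 0 = c₂.toFun 0 := h₁.trans h₂.symm
  have hw0 : 0 ≤ RPath.wedgeLen c₁ c₂ := RPath.wedgeLen_nonneg
  refine ⟨RPath.geodesic c₁ c₂, fun s _ => (RPath.geodesic_toFun_zero h0 s).trans h₁,
    RPath.geodesic_zero, RPath.geodesic_rhoDist h0,
    fun s hs t ht => RPath.rhoDist_geodesic h0 hs ht, fun s hs => ?_, fun s hs => ?_⟩
  · have ha : c₁.len - s ∈ Icc 0 c₁.len := ⟨by linarith [hs.2], by linarith [hs.1]⟩
    rw [RPath.geodesic_of_le hs.2]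
    exact ⟨RPath.trunc_len ha, (RPath.isPrefix_trunc c₁ _).2⟩
  · have hb : s - c₁.len + 2 * RPath.wedgeLen c₁ c₂ ∈ Icc 0 c₂.len :=
      ⟨by linarith [hs.1], by linarith [hs.2, show RPath.rhoDist c₁ c₂ =
        c₁.len + c₂.len - 2 * RPath.wedgeLen c₁ c₂ from rfl]⟩
    rw [RPath.geodesic_of_ge h0 hs.1]
    exact ⟨RPath.trunc_len hb, (RPath.isPrefix_trunc c₂ _).2⟩

/-- The space `X̄` of ρ-paths from the basepoint of a length space,
with the metric `d(c₁,c₂) = L(c₁)+L(c₂)-2L(c₁∧c₂)`, is a geodesic space: any two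
points `c₁, c₂` are joined by a geodesic `γ` obtained by first truncating `c₁` down to
the common initial segment `c₁ ∧ c₂` and then extending along `c₂`. -/
theorem rhoPathSpace_geodesic {X : Type*} [MetricSpace X] (hX : IsLengthSpace X)
    (base : X) (c₁ c₂ : RPath X) (h₁ : c₁.StartsAt base) (h₂ : c₂.StartsAt base) :
    ∃ γ : ℝ → RPath X,
      (∀ s ∈ Icc 0 (RPath.rhoDist c₁ c₂), (γ s).StartsAt base) ∧
      γ 0 = c₁ ∧ γ (RPath.rhoDist c₁ c₂) = c₂ ∧
      -- `γ` is a geodesic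
      (∀ s ∈ Icc 0 (RPath.rhoDist c₁ c₂), ∀ t ∈ Icc 0 (RPath.rhoDist c₁ c₂),
        RPath.rhoDist (γ s) (γ t) = |s - t|) ∧
      -- first `γ` truncates `c₁` down to `c₁ ∧ c₂` ...
      (∀ s ∈ Icc 0 (c₁.len - RPath.wedgeLen c₁ c₂),
        (γ s).len = c₁.len - s ∧ ∀ t ∈ Icc 0 (γ s).len, (γ s).toFun t = c₁.toFun t) ∧
      -- ... and then extends along `c₂`
      (∀ s ∈ Icc (c₁.len - RPath.wedgeLen c₁ c₂) (RPath.rhoDist c₁ c₂),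
        (γ s).len = s - c₁.len + 2 * RPath.wedgeLen c₁ c₂ ∧
        ∀ t ∈ Icc 0 (γ s).len, (γ s).toFun t = c₂.toFun t) :=
  rhoPathSpace_geodesic_general base c₁ c₂ h₁ h₂
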